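/- The Pitman asymptotic efficiency under segregation for the central similarity PCD, PAE_CS^S(τ) = ((μ_CS^S)''(τ, 0))²/ν_CS(τ) with (μ_CS^S)''(τ,0) = 8τ²/3 for τ ∈ (0,1] and ν_CS(τ) = τ⁴(6τ⁵ - 3τ⁴ - 25τ³ + τ² + 49τ + 14)/(45(τ+1)(2τ+1)(τ+2)), satisfies lim_{τ→0+} PAE_CS^S(τ) = 320/7 and PAE_CS^S(1) = 960/7. -/
import Mathlib


open Filter Topology

noncomputable def nuCSlow (τ : ℝ) : ℝ :=
  τ^4 * (6*τ^5 - 3*τ^4 - 25*τ^3 + τ^2 + 49*τ + 14) / (45 * (τ+1) * (2*τ+1) * (τ+2))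

noncomputable def paeCSseg (τ : ℝ) : ℝ := (8*τ^2/3)^2 / nuCSlow τ

theorem paeCSseg_values :
    Tendsto paeCSseg (𝓝[>] (0:ℝ)) (𝓝 (320/7)) ∧ paeCSseg 1 = 960/7 := by
  constructor
  · have key : ∀ τ : ℝ, 0 < τ → τ < 1/2 →
        paeCSseg τ = 320*(τ+1)*(2*τ+1)*(τ+2) / (6*τ^5 - 3*τ^4 - 25*τ^3 + τ^2 + 49*τ + 14) := by
      intro τ h0 h1
      have hP : (0:ℝ) < 6*τ^5 - 3*τ^4 - 25*τ^3 + τ^2 + 49*τ + 14 := by nlinarith [pow_pos h0 3, pow_pos h0 4, pow_pos h0 5, mul_pos h0 h0, sq_nonneg τ, mul_pos (mul_pos h0 h0) h0, sq_nonneg (τ*τ), mul_pos (mul_pos (mul_pos h0 h0) h0) h0]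
      have h1' : (0:ℝ) < τ + 1 := by linarith
      have h2' : (0:ℝ) < 2*τ + 1 := by linarith
      have h3' : (0:ℝ) < τ + 2 := by linarith
      unfold paeCSseg nuCSlow
      field_simp
      ring
    have hcont : Tendsto (fun τ : ℝ =>
        320*(τ+1)*(2*τ+1)*(τ+2) / (6*τ^5 - 3*τ^4 - 25*τ^3 + τ^2 + 49*τ + 14))
        (𝓝[>] (0:ℝ)) (𝓝 (320/7)) := by
      have : ContinuousAt (fun τ : ℝ =>
          320*(τ+1)*(2*τ+1)*(τ+2) / (6*τ^5 - 3*τ^4 - 25*τ^3 + τ^2 + 49*τ + 14)) 0 := by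
        apply ContinuousAt.div (by fun_prop) (by fun_prop)
        norm_num
      have h := this.continuousWithinAt (s := Set.Ioi (0:ℝ))
      simpa [ContinuousWithinAt] using h.tendsto.congr' (by
        filter_upwards with x using rfl) |>.mono_right (by norm_num : 𝓝 ((320:ℝ)*(0+1)*(2*0+1)*(0+2)/(6*0^5 - 3*0^4 - 25*0^3 + 0^2 + 49*0 + 14)) ≤ 𝓝 (320/7))
    refine hcont.congr' ?_
    filter_upwards [Ioo_mem_nhdsGT_of_mem (by norm_num : (0:ℝ) ∈ Set.Ico 0 (1/2))] with τ hτ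
    exact (key τ hτ.1 hτ.2).symm
  · unfold paeCSseg nuCSlow; norm_num
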